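/- arXiv:1412.1639 — 6 statements merged into one kernel-verified Lean document; each statement's English description precedes it below -/
import Mathlib

section
/- Let G = (V,E) be a finite directed acyclic graph, and let v ∈ V be a vertex of indegree exactly 1 with unique in-neighbor u (so u ≠ v). Suppose there is no vertex w with both (u,w) ∈ E and (v,w) ∈ E. Let G' be the directed graph on vertex set V \ {v} whose edge set consists of all edges of E not incident to v, together with an edge (u,w) for every edge (v,w) ∈ E. Then G is singly-connected if and only if G' is singly-connected. -/
/-- A simple (directed) path from `v` to `w` in the directed graph with edge relation `E`:
a nonempty list of pairwise distinct vertices starting at `v`, ending at `w`,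
with consecutive vertices joined by edges. -/
def IsSimplePath {V : Type*} (E : V → V → Prop) (v w : V) (p : List V) : Prop :=
  p.Chain' E ∧ p.head? = some v ∧ p.getLast? = some w ∧ p.Nodup

/-- A directed graph is singly-connected if for every pair of vertices there is
at most one simple path between them. -/
def SinglyConnected {V : Type*} (E : V → V → Prop) : Prop :=
  ∀ v w : V, ∀ p q : List V, IsSimplePath E v w p → IsSimplePath E v w q → p = q

/-- A directed graph is acyclic if it has no directed cycle. -/
def DAcyclic {V : Type*} (E : V → V → Prop) : Prop :=
  ∀ v : V, ¬ Relation.TransGen E v v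

/-!
Deleting `v` from a simple path between two vertices other than `v` yields a simple path of the
contracted graph: in the original path `v` can only sit between `u` and an out-neighbour `w` of
`v`, and `u → w` is an edge of the contracted graph. Conversely, reinserting `v` after `u`
whenever the next vertex is an out-neighbour of `v` (`uncontract`) turns simple paths of the
contracted graph avoiding `v` into simple paths of the original graph. The two operations are
mutually inverse because `u` and `v` have no common out-neighbour, so between vertices other than
`v` the simple paths of the two graphs correspond bijectively. Paths with an endpoint `v` reduce to paths with
endpoint `u`: a simple path into `v` ends with the edge `u → v`, and by acyclicity prepending `u`
to a simple path out of `v` keeps it simple.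
-/

open List

section

variable {V : Type*}

def UniqueSimplePaths (E : V → V → Prop) (a b : V) : Prop :=
  ∀ p q : List V, IsSimplePath E a b p → IsSimplePath E a b q → p = q

namespace IsSimplePath

variable {E : V → V → Prop} {a b x : V} {p : List V}

theorem eq_cons (hp : IsSimplePath E a b p) : ∃ t, p = a :: t := by
  obtain ⟨-, hh, -, -⟩ := hp
  cases p with
  | nil => simp at hh
  | cons y t => simp only [head?_cons, Option.some.injEq] at hh; exact ⟨t, by rw [hh]⟩

theorem reflTransGen_of_mem (hp : IsSimplePath E a b p) (hx : x ∈ p) :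
    Relation.ReflTransGen E a x := by
  obtain ⟨t, rfl⟩ := hp.eq_cons
  exact hp.1.induction _ _ (fun _ _ hyz h => h.tail hyz) (fun _ => .refl) x hx

theorem not_mem_of_rel (hacyc : DAcyclic E) (hp : IsSimplePath E a b p) (hxa : E x a) :
    x ∉ p :=
  fun hx => hacyc x (.head' hxa (hp.reflTransGen_of_mem hx))

theorem cons (hp : IsSimplePath E a b p) (hxa : E x a) (hx : x ∉ p) :
    IsSimplePath E x b (x :: p) := by
  obtain ⟨t, rfl⟩ := hp.eq_cons
  obtain ⟨hc, -, hl, hnd⟩ := hp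
  exact ⟨isChain_cons_cons.mpr ⟨hxa, hc⟩, rfl, by simpa [getLast?_cons] using hl,
    nodup_cons.mpr ⟨hx, hnd⟩⟩

theorem eq_singleton_of_self (hp : IsSimplePath E a a p) : p = [a] := by
  obtain ⟨t, rfl⟩ := hp.eq_cons
  obtain ⟨-, -, hl, hnd⟩ := hp
  cases t with
  | nil => rfl
  | cons y t =>
    rw [getLast?_cons_cons] at hl
    exact absurd (mem_of_getLast? hl) (nodup_cons.mp hnd).1

theorem exists_eq_append_singleton (hp : IsSimplePath E a b p) (hab : a ≠ b) :
    ∃ c p', p = p' ++ [b] ∧ E c b ∧ IsSimplePath E a c p' := by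
  obtain ⟨hc, hh, hl, hnd⟩ := hp
  obtain ⟨p', rfl⟩ := getLast?_eq_some_iff.mp hl
  have hp' : p' ≠ [] := by rintro rfl; simp_all
  refine ⟨p'.getLast hp', p', rfl, ?_, ?_, ?_, ?_, hnd.sublist (sublist_append_left _ _)⟩
  · exact (isChain_append.mp hc).2.2 _ (getLast_mem_getLast? hp') b rfl
  · exact (isChain_append.mp hc).1
  · rwa [head?_append_of_ne_nil _ hp'] at hh
  · exact getLast?_eq_some_getLast hp'

end IsSimplePath

section UniqueSimplePaths

variable {E : V → V → Prop} {a b : V}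

theorem uniqueSimplePaths_self : UniqueSimplePaths E a a :=
  fun _ _ hp hq => hp.eq_singleton_of_self.trans hq.eq_singleton_of_self.symm

theorem DAcyclic.uniqueSimplePaths_of_rel (hacyc : DAcyclic E) {x : V} (hxa : E x a)
    (h : UniqueSimplePaths E x b) : UniqueSimplePaths E a b := fun _ _ hp hq =>
  (cons.inj (h _ _ (hp.cons hxa (hp.not_mem_of_rel hacyc hxa))
    (hq.cons hxa (hq.not_mem_of_rel hacyc hxa)))).2

theorem uniqueSimplePaths_of_forall_rel_eq {c : V} (hb : ∀ x, E x b → x = c) (hab : a ≠ b)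
    (h : UniqueSimplePaths E a c) : UniqueSimplePaths E a b := by
  intro p q hp hq
  obtain ⟨c₁, p', rfl, hc₁, hp'⟩ := hp.exists_eq_append_singleton hab
  obtain ⟨c₂, q', rfl, hc₂, hq'⟩ := hq.exists_eq_append_singleton hab
  rw [hb _ hc₁] at hp'
  rw [hb _ hc₂] at hq'
  rw [h _ _ hp' hq']

theorem singlyConnected_iff_forall_uniqueSimplePaths_ne (hacyc : DAcyclic E) {u v : V}
    (huv : u ≠ v) (hin : E u v) (huniq : ∀ x, E x v → x = u) :
    SinglyConnected E ↔ ∀ a b : {x // x ≠ v}, UniqueSimplePaths E a b := by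
  refine ⟨fun h a b => h a b, fun h a b => ?_⟩
  have of_ne : ∀ a, a ≠ v → UniqueSimplePaths E a b := fun a ha => by
    rcases eq_or_ne b v with rfl | hb
    · exact uniqueSimplePaths_of_forall_rel_eq huniq ha (h ⟨a, ha⟩ ⟨u, huv⟩)
    · exact h ⟨a, ha⟩ ⟨b, hb⟩
  rcases eq_or_ne a v with rfl | ha
  · rcases eq_or_ne b a with rfl | hb
    · exact uniqueSimplePaths_self
    · exact hacyc.uniqueSimplePaths_of_rel hin (of_ne u huv)
  · exact of_ne a ha

theorem isSimplePath_subtype_iff {P : V → Prop} {R : V → V → Prop} {a b : Subtype P}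
    {l : List (Subtype P)} :
    IsSimplePath (fun x y : Subtype P => R x y) a b l ↔
      IsSimplePath R a b (l.map Subtype.val) := by
  have hval (o : Option (Subtype P)) (c : Subtype P) :
      o.map Subtype.val = some c.1 ↔ o = some c :=
    (Option.map_injective Subtype.val_injective).eq_iff (b := some c)
  rw [IsSimplePath, IsSimplePath, head?_map, getLast?_map, hval, hval]
  exact (isChain_map _).symm.and
    (Iff.rfl.and (Iff.rfl.and (nodup_map_iff Subtype.val_injective).symm))

theorem uniqueSimplePaths_subtype_iff {P : V → Prop} {R : V → V → Prop} (a b : Subtype P) :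
    UniqueSimplePaths (fun x y : Subtype P => R x y) a b ↔
      ∀ p q : List V, (∀ x ∈ p, P x) → (∀ x ∈ q, P x) →
        IsSimplePath R a b p → IsSimplePath R a b q → p = q := by
  constructor
  · intro h p q hpP hqP hp hq
    lift p to List (Subtype P) using hpP
    lift q to List (Subtype P) using hqP
    rw [← isSimplePath_subtype_iff] at hp hq
    rw [h p q hp hq]
  · intro h p q hp hq
    have hP (l : List (Subtype P)) : ∀ x ∈ l.map Subtype.val, P x := by simp +contextual
    rw [isSimplePath_subtype_iff] at hp hq
    exact map_injective_iff.mpr Subtype.val_injective (h _ _ (hP p) (hP q) hp hq)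

end UniqueSimplePaths

section Contraction

variable (E : V → V → Prop) (u v : V)

def contractRel (a b : V) : Prop := E a b ∨ (a = u ∧ E v b)

open Classical in
noncomputable def uncontract : List V → List V
  | [] => []
  | [a] => [a]
  | a :: b :: t =>
    if a = u ∧ E v b then a :: v :: uncontract (b :: t) else a :: uncontract (b :: t)

variable {E u v}

theorem head?_uncontract : ∀ p : List V, (uncontract E u v p).head? = p.head?
  | [] | [_] => rfl
  | a :: b :: t => by rw [uncontract]; split_ifs <;> rfl

theorem getLast?_uncontract : ∀ p : List V, (uncontract E u v p).getLast? = p.getLast?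
  | [] | [_] => rfl
  | a :: b :: t => by
    have ih := getLast?_uncontract (b :: t)
    rw [uncontract]; split_ifs <;> simp [getLast?_cons, ih]

theorem mem_uncontract {x : V} : ∀ {p : List V}, x ∈ uncontract E u v p → x ∈ p ∨ x = v
  | [], h | [_], h => Or.inl h
  | a :: b :: t, h => by
    have ih := @mem_uncontract x (b :: t)
    rw [uncontract] at h
    split_ifs at h <;> grind

theorem uncontract_of_not_mem : ∀ {p : List V}, u ∉ p → uncontract E u v p = p
  | [], _ | [_], _ => rfl
  | a :: b :: t, hu => by
    rw [uncontract, if_neg (fun h : a = u ∧ E v b => hu (h.1 ▸ mem_cons_self)),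
      uncontract_of_not_mem (fun h => hu (mem_cons_of_mem a h))]

theorem nodup_uncontract (huv : u ≠ v) :
    ∀ {p : List V}, p.Nodup → v ∉ p → (uncontract E u v p).Nodup
  | [], hp, _ | [_], hp, _ => hp
  | a :: b :: t, hp, hv => by
    rw [nodup_cons] at hp
    have hv' : v ∉ b :: t := fun h => hv (mem_cons_of_mem a h)
    rw [uncontract]; split_ifs with h
    · obtain ⟨rfl, -⟩ := h
      rw [uncontract_of_not_mem hp.1]
      exact nodup_cons.mpr ⟨by simp [huv, hp.1], nodup_cons.mpr ⟨hv', hp.2⟩⟩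
    · refine nodup_cons.mpr ⟨fun ha => ?_, nodup_uncontract huv hp.2 hv'⟩
      rcases mem_uncontract ha with ha | rfl
      exacts [hp.1 ha, hv mem_cons_self]

theorem isChain_uncontract (hin : E u v) :
    ∀ {p : List V}, IsChain (contractRel E u v) p → IsChain E (uncontract E u v p)
  | [], _ => .nil
  | [a], _ => .singleton a
  | a :: b :: t, hp => by
    rw [isChain_cons_cons] at hp
    have ih := isChain_uncontract hin hp.2
    have hhead : ∀ y ∈ (uncontract E u v (b :: t)).head?, y = b := by simp [head?_uncontract]
    rw [uncontract]; split_ifs with h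
    · obtain ⟨rfl, hvb⟩ := h
      exact isChain_cons_cons.mpr
        ⟨hin, isChain_cons.mpr ⟨fun y hy => hhead y hy ▸ hvb, ih⟩⟩
    · exact isChain_cons.mpr ⟨fun y hy => hhead y hy ▸ hp.1.resolve_right h, ih⟩

theorem filter_uncontract [DecidableEq V] :
    ∀ {p : List V}, v ∉ p → (uncontract E u v p).filter (· ≠ v) = p
  | [], _ => rfl
  | [a], hv => by simpa [uncontract] using fun h : a = v => hv (h ▸ mem_singleton_self a)
  | a :: b :: t, hv => by
    have ha : a ≠ v := fun h => hv (h ▸ mem_cons_self)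
    have ih := filter_uncontract (fun h => hv (mem_cons_of_mem a h))
    rw [uncontract]; split_ifs <;> simpa [ha] using ih

theorem IsSimplePath.uncontract {a b : V} {p : List V} (huv : u ≠ v) (hin : E u v)
    (hp : IsSimplePath (contractRel E u v) a b p) (hv : v ∉ p) :
    IsSimplePath E a b (uncontract E u v p) :=
  ⟨isChain_uncontract hin hp.1, (head?_uncontract p).trans hp.2.1,
    (getLast?_uncontract p).trans hp.2.2.1, nodup_uncontract huv hp.2.2.2 hv⟩

section Filter

variable [DecidableEq V]

theorem isChain_filter_ne_cons (huv : u ≠ v) (huniq : ∀ x, E x v → x = u) :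
    ∀ {a : V} {p : List V}, a ≠ v → IsChain E (a :: p) → (a :: p).getLast? ≠ some v →
      IsChain (contractRel E u v) ((a :: p).filter (· ≠ v))
  | a, [], ha, _, _ => by simp [ha]
  | a, [b], ha, hc, hl => by
    have hb : b ≠ v := by simpa using hl
    simpa [ha, hb, contractRel] using Or.inl (isChain_pair.mp hc)
  | a, b :: c :: t, ha, hc, hl => by
    rw [isChain_cons_cons] at hc
    by_cases hb : b = v
    · rw [hb] at hc
      have hvc := isChain_cons_cons.mp hc.2
      have hcv : c ≠ v := fun h => huv (huniq v (h ▸ hvc.1)).symm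
      have ih := isChain_filter_ne_cons huv huniq hcv hvc.2 (by simpa using hl)
      rw [filter_cons_of_pos (by simpa using hcv)] at ih
      rw [hb, filter_cons_of_pos (by simpa using ha), filter_cons_of_neg (by simp),
        filter_cons_of_pos (by simpa using hcv)]
      exact isChain_cons_cons.mpr ⟨Or.inr ⟨huniq a hc.1, hvc.1⟩, ih⟩
    · have ih := isChain_filter_ne_cons huv huniq hb hc.2 (by simpa using hl)
      rw [filter_cons_of_pos (by simpa using hb)] at ih
      rw [filter_cons_of_pos (by simpa using ha), filter_cons_of_pos (by simpa using hb)]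
      exact isChain_cons_cons.mpr ⟨Or.inl hc.1, ih⟩

theorem uncontract_filter_ne_cons (huv : u ≠ v) (huniq : ∀ x, E x v → x = u)
    (hno : ¬∃ w, E u w ∧ E v w) :
    ∀ {a : V} {p : List V}, a ≠ v → IsChain E (a :: p) → (a :: p).getLast? ≠ some v →
      uncontract E u v ((a :: p).filter (· ≠ v)) = a :: p
  | a, [], ha, _, _ => by simp [ha, uncontract]
  | a, [b], ha, hc, hl => by
    have hb : b ≠ v := by simpa using hl
    have hab : ¬(a = u ∧ E v b) := fun h => hno ⟨b, h.1 ▸ isChain_pair.mp hc, h.2⟩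
    rw [filter_cons_of_pos (by simpa using ha), filter_cons_of_pos (by simpa using hb),
      filter_nil, uncontract, if_neg hab, uncontract]
  | a, b :: c :: t, ha, hc, hl => by
    rw [isChain_cons_cons] at hc
    by_cases hb : b = v
    · rw [hb] at hc
      have hvc := isChain_cons_cons.mp hc.2
      have hcv : c ≠ v := fun h => huv (huniq v (h ▸ hvc.1)).symm
      have ih := uncontract_filter_ne_cons huv huniq hno hcv hvc.2 (by simpa using hl)
      rw [filter_cons_of_pos (by simpa using hcv)] at ih
      rw [hb, filter_cons_of_pos (by simpa using ha), filter_cons_of_neg (by simp),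
        filter_cons_of_pos (by simpa using hcv), uncontract, if_pos ⟨huniq a hc.1, hvc.1⟩, ih]
    · have ih := uncontract_filter_ne_cons huv huniq hno hb hc.2 (by simpa using hl)
      rw [filter_cons_of_pos (by simpa using hb)] at ih
      rw [filter_cons_of_pos (by simpa using ha), filter_cons_of_pos (by simpa using hb),
        uncontract, if_neg (fun h : a = u ∧ E v b => hno ⟨b, h.1 ▸ hc.1, h.2⟩), ih]

variable {a b : V} {p : List V}

theorem IsSimplePath.filter_ne (huv : u ≠ v) (huniq : ∀ x, E x v → x = u)
    (hp : IsSimplePath E a b p) (ha : a ≠ v) (hb : b ≠ v) :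
    IsSimplePath (contractRel E u v) a b (p.filter (· ≠ v)) := by
  obtain ⟨t, rfl⟩ := hp.eq_cons
  obtain ⟨hc, -, hl, hnd⟩ := hp
  have hlv : (a :: t).getLast? ≠ some v := by rw [hl]; simpa using hb
  obtain ⟨s, hs⟩ := getLast?_eq_some_iff.mp hl
  refine ⟨isChain_filter_ne_cons huv huniq ha hc hlv, by simp [ha], ?_,
    hnd.sublist filter_sublist⟩
  rw [hs, filter_append]
  simp [hb]

theorem uncontract_filter_ne (huv : u ≠ v) (huniq : ∀ x, E x v → x = u)
    (hno : ¬∃ w, E u w ∧ E v w) (hp : IsSimplePath E a b p) (ha : a ≠ v) (hb : b ≠ v) :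
    uncontract E u v (p.filter (· ≠ v)) = p := by
  obtain ⟨t, rfl⟩ := hp.eq_cons
  exact uncontract_filter_ne_cons huv huniq hno ha hp.1 (by rw [hp.2.2.1]; simpa using hb)

end Filter

theorem uniqueSimplePaths_iff_contractRel (huv : u ≠ v) (hin : E u v)
    (huniq : ∀ x, E x v → x = u) (hno : ¬∃ w, E u w ∧ E v w) {a b : V} (ha : a ≠ v)
    (hb : b ≠ v) :
    UniqueSimplePaths E a b ↔
      ∀ p q : List V, (∀ x ∈ p, x ≠ v) → (∀ x ∈ q, x ≠ v) →
        IsSimplePath (contractRel E u v) a b p → IsSimplePath (contractRel E u v) a b q →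
          p = q := by
  classical
  constructor
  · intro h p q hpv hqv hp hq
    replace hpv : v ∉ p := fun hv => hpv v hv rfl
    replace hqv : v ∉ q := fun hv => hqv v hv rfl
    rw [← filter_uncontract (E := E) (u := u) hpv, ← filter_uncontract (E := E) (u := u) hqv,
      h _ _ (hp.uncontract huv hin hpv) (hq.uncontract huv hin hqv)]
  · intro h p q hp hq
    have hv (l : List V) : ∀ x ∈ l.filter (· ≠ v), x ≠ v := by simp +contextual
    rw [← uncontract_filter_ne huv huniq hno hp ha hb,
      ← uncontract_filter_ne huv huniq hno hq ha hb,
      h _ _ (hv p) (hv q) (hp.filter_ne huv huniq ha hb) (hq.filter_ne huv huniq ha hb)]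

end Contraction

end

theorem singlyConnected_iff_contract_indegree_one_general {V : Type*}
    (E : V → V → Prop) (hacyc : DAcyclic E) (u v : V) (huv : u ≠ v)
    (hin : E u v) (huniq : ∀ x : V, E x v → x = u)
    (hno : ¬ ∃ w : V, E u w ∧ E v w) :
    SinglyConnected E ↔
      SinglyConnected (fun a b : {x : V // x ≠ v} => E a.1 b.1 ∨ (a.1 = u ∧ E v b.1)) := by
  rw [singlyConnected_iff_forall_uniqueSimplePaths_ne hacyc huv hin huniq]
  exact forall₂_congr fun a b =>
    (uniqueSimplePaths_iff_contractRel huv hin huniq hno a.2 b.2).trans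
      (uniqueSimplePaths_subtype_iff (R := contractRel E u v) a b).symm

/-- contracting an indegree-1 vertex `v` (with unique in-neighbor `u`) of a
finite DAG into `u` preserves single connectedness in both directions, provided `u` and `v`
have no common out-neighbor.  The contracted graph lives on the vertex set `V \ {v}`; its
edges are the edges of `E` not incident to `v`, together with an edge `(u,w)` for every
edge `(v,w) ∈ E`. -/
theorem singlyConnected_iff_contract_indegree_one {V : Type*} [Finite V]
    (E : V → V → Prop) (hacyc : DAcyclic E) (u v : V) (huv : u ≠ v)
    (hin : E u v) (huniq : ∀ x : V, E x v → x = u)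
    (hno : ¬ ∃ w : V, E u w ∧ E v w) :
    SinglyConnected E ↔
      SinglyConnected (fun a b : {x : V // x ≠ v} => E a.1 b.1 ∨ (a.1 = u ∧ E v b.1)) :=
  singlyConnected_iff_contract_indegree_one_general E hacyc u v huv hin huniq hno
end

section
/- Let G = (V,E) be a finite undirected graph and let G' = (V',E') be the ESC reduction graph of G. For every edge e = {u,w} ∈ E there are exactly two simple paths from e' to e'' in G', namely (e', u', u'', e'') and (e', w', w'', e''); and for every ordered pair (x,y) of distinct vertices of G' that is not of the form (e', e'') for some e ∈ E, there is at most one simple path from x to y in G'. -/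
/-- The vertex set of the ESC reduction graph of an undirected graph `G`: two vertices
`v'`, `v''` for every vertex `v` of `G` and two vertices `e'`, `e''` for every edge `e`
of `G`. -/
def ESCVert {V : Type*} (G : SimpleGraph V) : Type _ :=
  (V ⊕ V) ⊕ (G.edgeSet ⊕ G.edgeSet)

/-- The vertex `v'` of the ESC reduction graph. -/
def ESCVert.vA {V : Type*} (G : SimpleGraph V) (v : V) : ESCVert G :=
  Sum.inl (Sum.inl v)

/-- The vertex `v''` of the ESC reduction graph. -/
def ESCVert.vB {V : Type*} (G : SimpleGraph V) (v : V) : ESCVert G :=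
  Sum.inl (Sum.inr v)

/-- The vertex `e'` of the ESC reduction graph. -/
def ESCVert.eA {V : Type*} (G : SimpleGraph V) (e : G.edgeSet) : ESCVert G :=
  Sum.inr (Sum.inl e)

/-- The vertex `e''` of the ESC reduction graph. -/
def ESCVert.eB {V : Type*} (G : SimpleGraph V) (e : G.edgeSet) : ESCVert G :=
  Sum.inr (Sum.inr e)

/-- The edge set of the ESC reduction graph of `G`: an edge `(v', v'')` for every vertex
`v` of `G`, and edges `(e', u')`, `(e', w')`, `(u'', e'')`, `(w'', e'')` for every
undirected edge `e = {u, w}` of `G` (i.e. edges `(e', v')` and `(v'', e'')` for every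
endpoint `v` of `e`). -/
def ESCEdges {V : Type*} (G : SimpleGraph V) : Set (ESCVert G × ESCVert G) :=
  {p | (∃ v : V, p = (ESCVert.vA G v, ESCVert.vB G v)) ∨
       (∃ (e : G.edgeSet) (v : V), v ∈ (e : Sym2 V) ∧ p = (ESCVert.eA G e, ESCVert.vA G v)) ∨
       (∃ (e : G.edgeSet) (v : V), v ∈ (e : Sym2 V) ∧ p = (ESCVert.vB G v, ESCVert.eB G e))}

/-- A vertex cover of the undirected graph `G`: a set of vertices meeting every edge. -/
def IsVertexCover {V : Type*} (G : SimpleGraph V) (U : Set V) : Prop :=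
  ∀ e ∈ G.edgeSet, ∃ v ∈ U, v ∈ e

namespace ESCProof
open ESCVert
variable {V : Type*} {G : SimpleGraph V}

lemma mem_edges {a b : ESCVert G} :
    (a, b) ∈ ESCEdges G ↔
      (∃ v : V, a = vA G v ∧ b = vB G v) ∨
      (∃ (e : G.edgeSet) (v : V), v ∈ (e : Sym2 V) ∧ a = eA G e ∧ b = vA G v) ∨
      (∃ (e : G.edgeSet) (v : V), v ∈ (e : Sym2 V) ∧ a = vB G v ∧ b = eB G e) := by
  simp [ESCEdges, Prod.ext_iff]

lemma no_edge_eB {e : G.edgeSet} {b : ESCVert G} (h : (eB G e, b) ∈ ESCEdges G) : False := by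
  rw [mem_edges] at h
  rcases h with ⟨v, h, -⟩ | ⟨f, v, -, h, -⟩ | ⟨f, v, -, h, -⟩
  · exact absurd h (by simp [vA, eB])
  · rw [eB, eA] at h; injection h with h; injection h
  · exact absurd h (by simp [vB, eB])

lemma edge_from_vA {v : V} {b : ESCVert G} (h : (vA G v, b) ∈ ESCEdges G) : b = vB G v := by
  rw [mem_edges] at h
  rcases h with ⟨x, h1, h2⟩ | ⟨f, x, -, h1, -⟩ | ⟨f, x, -, h1, -⟩
  · rw [vA, vA] at h1; injection h1 with h1; injection h1 with h1; subst h1; exact h2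
  · exact absurd h1 (by simp [vA, eA])
  · rw [vA, vB] at h1; injection h1 with h1; injection h1

lemma edge_from_vB {v : V} {b : ESCVert G} (h : (vB G v, b) ∈ ESCEdges G) :
    ∃ e : G.edgeSet, v ∈ (e : Sym2 V) ∧ b = eB G e := by
  rw [mem_edges] at h
  rcases h with ⟨x, h1, h2⟩ | ⟨f, x, -, h1, -⟩ | ⟨f, x, hm, h1, h2⟩
  · rw [vA, vB] at h1; injection h1 with h1; injection h1
  · exact absurd h1 (by simp [vB, eA])
  · rw [vB, vB] at h1; injection h1 with h1; injection h1 with h1; subst h1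
    exact ⟨f, hm, h2⟩

lemma edge_from_eA {e : G.edgeSet} {b : ESCVert G} (h : (eA G e, b) ∈ ESCEdges G) :
    ∃ v : V, v ∈ (e : Sym2 V) ∧ b = vA G v := by
  rw [mem_edges] at h
  rcases h with ⟨x, h1, h2⟩ | ⟨f, x, hm, h1, h2⟩ | ⟨f, x, -, h1, -⟩
  · exact absurd h1 (by simp [vA, eA])
  · rw [eA, eA] at h1; injection h1 with h1; injection h1 with h1; subst h1
    exact ⟨x, hm, h2⟩
  · exact absurd h1 (by simp [vB, eA])


lemma chain_eB {e : G.edgeSet} {l : List (ESCVert G)}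
    (h : (eB G e :: l).Chain' fun a b => (a, b) ∈ ESCEdges G) : l = [] := by
  cases l with
  | nil => rfl
  | cons b l => exact absurd (List.isChain_cons_cons.mp h).1 no_edge_eB

lemma chain_vB {v : V} {l : List (ESCVert G)}
    (h : (vB G v :: l).Chain' fun a b => (a, b) ∈ ESCEdges G) :
    l = [] ∨ ∃ e : G.edgeSet, v ∈ (e : Sym2 V) ∧ l = [eB G e] := by
  cases l with
  | nil => exact Or.inl rfl
  | cons b l =>
    obtain ⟨h1, h2⟩ := List.isChain_cons_cons.mp h
    obtain ⟨e, hm, rfl⟩ := edge_from_vB h1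
    exact Or.inr ⟨e, hm, by rw [chain_eB h2]⟩

lemma chain_vA {v : V} {l : List (ESCVert G)}
    (h : (vA G v :: l).Chain' fun a b => (a, b) ∈ ESCEdges G) :
    l = [] ∨ l = [vB G v] ∨
      ∃ e : G.edgeSet, v ∈ (e : Sym2 V) ∧ l = [vB G v, eB G e] := by
  cases l with
  | nil => exact Or.inl rfl
  | cons b l =>
    obtain ⟨h1, h2⟩ := List.isChain_cons_cons.mp h
    obtain rfl := edge_from_vA h1
    rcases chain_vB h2 with rfl | ⟨e, hm, rfl⟩
    · exact Or.inr (Or.inl rfl)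
    · exact Or.inr (Or.inr ⟨e, hm, rfl⟩)

/-- Classification of simple paths with distinct endpoints. -/
lemma spath_classify {x y : ESCVert G} {p : List (ESCVert G)}
    (hp : IsSimplePath (fun a b => (a, b) ∈ ESCEdges G) x y p) (hxy : x ≠ y) :
    (∃ v, x = vA G v ∧ y = vB G v ∧ p = [vA G v, vB G v]) ∨
    (∃ (e : G.edgeSet) (v : V), x = eA G e ∧ y = vA G v ∧ p = [eA G e, vA G v]) ∨
    (∃ (e : G.edgeSet) (v : V), x = vB G v ∧ y = eB G e ∧ p = [vB G v, eB G e]) ∨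
    (∃ (e : G.edgeSet) (v : V), x = eA G e ∧ y = vB G v ∧ p = [eA G e, vA G v, vB G v]) ∨
    (∃ (e : G.edgeSet) (v : V), x = vA G v ∧ y = eB G e ∧ p = [vA G v, vB G v, eB G e]) ∨
    (∃ (e f : G.edgeSet) (v : V), v ∈ (e : Sym2 V) ∧ v ∈ (f : Sym2 V) ∧
      x = eA G e ∧ y = eB G f ∧ p = [eA G e, vA G v, vB G v, eB G f]) := by
  obtain ⟨hc, hh, hl, -⟩ := hp
  cases p with
  | nil => simp at hh
  | cons a l =>
    simp only [List.head?_cons, Option.some.injEq] at hh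
    subst hh
    cases l with
    | nil => simp only [List.getLast?_singleton, Option.some.injEq] at hl; exact absurd hl hxy
    | cons b l =>
      obtain ⟨h1, h2⟩ := List.isChain_cons_cons.mp hc
      rw [mem_edges] at h1
      rcases h1 with ⟨v, rfl, rfl⟩ | ⟨e, v, hm, rfl, rfl⟩ | ⟨e, v, hm, rfl, rfl⟩
      · -- x = vA v, b = vB v
        rcases chain_vB h2 with rfl | ⟨f, hf, rfl⟩
        · simp only [List.getLast?_cons_cons, List.getLast?_singleton,
            Option.some.injEq] at hl
          subst hl
          exact Or.inl ⟨v, rfl, rfl, rfl⟩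
        · simp only [List.getLast?_cons_cons, List.getLast?_singleton,
            Option.some.injEq] at hl
          subst hl
          exact Or.inr (Or.inr (Or.inr (Or.inr (Or.inl ⟨f, v, rfl, rfl, rfl⟩))))
      · -- x = eA e, b = vA v
        rcases chain_vA h2 with rfl | rfl | ⟨f, hf, rfl⟩ <;>
          simp only [List.getLast?_cons_cons, List.getLast?_singleton,
            Option.some.injEq] at hl <;> subst hl
        · exact Or.inr (Or.inl ⟨e, v, rfl, rfl, rfl⟩)
        · exact Or.inr (Or.inr (Or.inr (Or.inl ⟨e, v, rfl, rfl, rfl⟩)))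
        · exact Or.inr (Or.inr (Or.inr (Or.inr (Or.inr ⟨e, f, v, hm, hf, rfl, rfl, rfl⟩))))
      · -- x = vB v, b = eB e
        obtain rfl := chain_eB h2
        simp only [List.getLast?_cons_cons, List.getLast?_singleton,
          Option.some.injEq] at hl
        subst hl
        exact Or.inr (Or.inr (Or.inl ⟨e, v, rfl, rfl, rfl⟩))


lemma build {e : G.edgeSet} {u : V} (hu : u ∈ (e : Sym2 V)) :
    IsSimplePath (fun a b => (a, b) ∈ ESCEdges G) (eA G e) (eB G e)
      [eA G e, vA G u, vB G u, eB G e] := by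
  refine ⟨?_, rfl, by simp, ?_⟩
  · refine List.isChain_cons_cons.mpr ⟨?_, List.isChain_cons_cons.mpr ⟨?_, List.isChain_cons_cons.mpr ⟨?_, ?_⟩⟩⟩
    · exact Or.inr (Or.inl ⟨e, u, hu, rfl⟩)
    · exact Or.inl ⟨u, rfl⟩
    · exact Or.inr (Or.inr ⟨e, u, hu, rfl⟩)
    · exact List.isChain_singleton _
  · simp [ESCVert, vA, vB, eA, eB, List.nodup_cons, Sum.inl.injEq, Sum.inr.injEq]

end ESCProof

open ESCVert in
/-- in the ESC reduction graph `G'` of a finite undirected graph `G`, for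
every edge `e = {u, w}` of `G` there are exactly two simple paths from `e'` to `e''`,
namely `(e', u', u'', e'')` and `(e', w', w'', e'')`; and for every ordered pair of
distinct vertices of `G'` not of the form `(e', e'')`, there is at most one simple path
between them. -/
theorem esc_paths_characterization {V : Type*} [Finite V] (G : SimpleGraph V) :
    (∀ (e : G.edgeSet) (u w : V), (e : Sym2 V) = s(u, w) →
      {p : List (ESCVert G) |
          IsSimplePath (fun a b => (a, b) ∈ ESCEdges G) (eA G e) (eB G e) p} =
        {[eA G e, vA G u, vB G u, eB G e], [eA G e, vA G w, vB G w, eB G e]}) ∧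
    (∀ x y : ESCVert G, x ≠ y → (∀ e : G.edgeSet, ¬(x = eA G e ∧ y = eB G e)) →
      ∀ p q : List (ESCVert G),
        IsSimplePath (fun a b => (a, b) ∈ ESCEdges G) x y p →
        IsSimplePath (fun a b => (a, b) ∈ ESCEdges G) x y q → p = q) := by
  constructor
  · intro e u w he
    ext p
    simp only [Set.mem_setOf_eq, Set.mem_insert_iff, Set.mem_singleton_iff]
    constructor
    · intro hp
      have hxy : eA G e ≠ eB G e := fun h => by
        rw [eA, eB] at h; injection h with h; injection h
      rcases ESCProof.spath_classify hp hxy with ⟨v, hx, -, -⟩ | ⟨e', v, -, hy, -⟩ |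
        ⟨e', v, hx, -, -⟩ | ⟨e', v, -, hy, -⟩ | ⟨e', v, hx, -, -⟩ |
        ⟨e', f, v, hv, hw, hx, hy, rfl⟩
      · exact absurd hx (by simp [eA, vA])
      · exact absurd hy (by simp [eB, vA])
      · exact absurd hx (by simp [eA, vB])
      · exact absurd hy (by simp [eB, vB])
      · exact absurd hx (by simp [eA, vA])
      · rw [eA, eA] at hx; injection hx with hx; injection hx with hx; subst hx
        rw [eB, eB] at hy; injection hy with hy; injection hy with hy; subst hy
        rw [he, Sym2.mem_iff] at hv
        rcases hv with rfl | rfl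
        · exact Or.inl rfl
        · exact Or.inr rfl
    · rintro (rfl | rfl)
      · exact ESCProof.build (by rw [he]; exact Sym2.mem_mk_left u w)
      · exact ESCProof.build (by rw [he]; exact Sym2.mem_mk_right u w)
  · intro x y hxy hforb p q hp hq
    rcases ESCProof.spath_classify hp hxy with ⟨v, rfl, rfl, rfl⟩ | ⟨e, v, rfl, rfl, rfl⟩ |
      ⟨e, v, rfl, rfl, rfl⟩ | ⟨e, v, rfl, rfl, rfl⟩ | ⟨e, v, rfl, rfl, rfl⟩ |
      ⟨e, f, v, hv, hv', rfl, rfl, rfl⟩ <;>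
    rcases ESCProof.spath_classify hq hxy with ⟨v2, hx2, hy2, rfl⟩ | ⟨e2, v2, hx2, hy2, rfl⟩ |
      ⟨e2, v2, hx2, hy2, rfl⟩ | ⟨e2, v2, hx2, hy2, rfl⟩ | ⟨e2, v2, hx2, hy2, rfl⟩ |
      ⟨e2, f2, v2, hv2, hv2', hx2, hy2, rfl⟩ <;>
    clear hp hq <;>
    try simp_all [ESCVert, vA, vB, eA, eB, Sum.inl.injEq, Sum.inr.injEq]
    by_contra hne
    have h1 : (e2 : Sym2 V) = s(v, v2) := (Sym2.mem_and_mem_iff hne).mp ⟨hv, hv2⟩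
    have h2 : (f2 : Sym2 V) = s(v, v2) := (Sym2.mem_and_mem_iff hne).mp ⟨hv', hv2'⟩
    exact hforb (Subtype.ext (h2.trans h1.symm))
end

section
/- Let G = (V,E) be a finite undirected graph, let G' = (V',E') be the ESC reduction graph of G, and let U ⊆ V be a vertex cover of G. Define C = {(v',v'') : v ∈ U}. Then |C| = |U| and the directed graph (V', E' \ C) is singly-connected. -/
/-!
Every edge of the ESC graph goes from some `e'` to some `v'`, from `v'` to `v''`, or from some
`v''` to some `e''`. A path leaving `e'` goes to some `u'` with `u ∈ e`, and can continue only
through `u''` (possible only if `u ∉ U`) and then some `f''` with `u ∈ f`. Hence its target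
determines `u`: directly if it is `u'` or `u''`, and if it is `f''` because `u` is then an
endpoint of `e` outside the cover `U`, and an edge has at most one such endpoint. So no vertex has
two successors from which the same target is reachable, which makes simple paths unique by
induction along the path.
-/

open Relation

section SimplePath

variable {α : Type*} {R : α → α → Prop} {v w : α}

theorem IsSimplePath.reflTransGen {p : List α} (hp : IsSimplePath R v w p) :
    ReflTransGen R v w := by
  obtain ⟨hc, hh, hl, -⟩ := hp
  cases p with
  | nil => simp at hh
  | cons a p =>
    obtain rfl : a = v := by simpa using hh
    exact List.relationReflTransGen_of_exists_isChain_cons p hc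
      (by simpa [List.getLast?_eq_some_getLast] using hl)

theorem IsSimplePath.eq_of_singleton {a : α} (hp : IsSimplePath R v w [a]) : a = v ∧ a = w := by
  obtain ⟨-, hh, hl, -⟩ := hp
  simp only [List.head?_cons, List.getLast?_singleton, Option.some.injEq] at hh hl
  exact ⟨hh, hl⟩

theorem IsSimplePath.of_cons_cons {a b : α} {t : List α}
    (hp : IsSimplePath R v w (a :: b :: t)) :
    a = v ∧ R v b ∧ v ∉ b :: t ∧ IsSimplePath R b w (b :: t) := by
  obtain ⟨hc, hh, hl, hnd⟩ := hp
  obtain rfl : a = v := by simpa using hh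
  obtain ⟨hab, hc'⟩ := List.isChain_cons_cons.mp hc
  rw [List.getLast?_cons_cons] at hl
  exact ⟨rfl, hab, (List.nodup_cons.mp hnd).1, hc', rfl, hl, (List.nodup_cons.mp hnd).2⟩

theorem IsSimplePath.ne_of_cons_cons {a b : α} {t : List α}
    (hp : IsSimplePath R v w (a :: b :: t)) : v ≠ w := by
  rintro rfl
  obtain ⟨-, -, hv, -, -, hl, -⟩ := hp.of_cons_cons
  exact hv (List.mem_of_getLast? hl)

theorem singlyConnected_of_succ_unique
    (h : ∀ a b b' w, R a b → R a b' → ReflTransGen R b w → ReflTransGen R b' w → b = b') :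
    SinglyConnected R := by
  intro v w p
  induction p generalizing v with
  | nil => simp [IsSimplePath]
  | cons a p ih =>
    intro q hp hq
    rcases p with _ | ⟨b, t⟩ <;> rcases q with _ | ⟨a', _ | ⟨b', t'⟩⟩
    · simp [IsSimplePath] at hq
    · rw [hp.eq_of_singleton.1, hq.eq_of_singleton.1]
    · obtain ⟨rfl, rfl⟩ := hp.eq_of_singleton
      exact absurd rfl hq.ne_of_cons_cons
    · simp [IsSimplePath] at hq
    · obtain ⟨rfl, rfl⟩ := hq.eq_of_singleton
      exact absurd rfl hp.ne_of_cons_cons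
    · obtain ⟨rfl, hvb, -, hp'⟩ := hp.of_cons_cons
      obtain ⟨rfl, hvb', -, hq'⟩ := hq.of_cons_cons
      obtain rfl := h _ _ _ _ hvb hvb' hp'.reflTransGen hq'.reflTransGen
      rw [ih b _ hp' hq']

end SimplePath

theorem IsVertexCover.eq_of_mem_of_notMem {V : Type*} {G : SimpleGraph V} {U : Set V}
    (hU : IsVertexCover G U) {e : Sym2 V} (he : e ∈ G.edgeSet) {u u' : V}
    (hu : u ∈ e) (hu' : u' ∈ e) (huU : u ∉ U) (hu'U : u' ∉ U) : u = u' := by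
  by_contra hne
  obtain ⟨c, hcU, hc⟩ := hU e he
  rw [(Sym2.mem_and_mem_iff hne).mp ⟨hu, hu'⟩, Sym2.mem_iff] at hc
  rcases hc with rfl | rfl <;> contradiction

namespace ESCVert

variable {V : Type*} {G : SimpleGraph V} {U : Set V}

theorem vA_injective : Function.Injective (vA G) :=
  fun _ _ h => Sum.inl_injective (Sum.inl_injective h)

def escCutAdj (G : SimpleGraph V) (U : Set V) (a b : ESCVert G) : Prop :=
  (a, b) ∈ ESCEdges G \ {p | ∃ v ∈ U, p = (vA G v, vB G v)}

theorem escCutAdj_cases {a b : ESCVert G} (h : escCutAdj G U a b) :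
    (∃ v ∉ U, a = vA G v ∧ b = vB G v) ∨
    (∃ (e : G.edgeSet) (u : V), u ∈ (e : Sym2 V) ∧ a = eA G e ∧ b = vA G u) ∨
    (∃ (e : G.edgeSet) (u : V), u ∈ (e : Sym2 V) ∧ a = vB G u ∧ b = eB G e) := by
  obtain ⟨hE, hC⟩ := h
  simp only [ESCEdges, Set.mem_ofPred_eq, Prod.mk.injEq] at hE hC
  grind

theorem of_escCutAdj_vA {v : V} {b : ESCVert G} (h : escCutAdj G U (vA G v) b) :
    v ∉ U ∧ b = vB G v := by
  rcases escCutAdj_cases h with ⟨_, hx, hv, rfl⟩ | ⟨_, _, -, hv, -⟩ | ⟨_, _, -, hv, -⟩ <;>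
    cases hv
  exact ⟨hx, rfl⟩

theorem of_escCutAdj_vB {v : V} {b : ESCVert G} (h : escCutAdj G U (vB G v) b) :
    ∃ e : G.edgeSet, v ∈ (e : Sym2 V) ∧ b = eB G e := by
  rcases escCutAdj_cases h with ⟨_, -, hv, -⟩ | ⟨_, _, -, hv, -⟩ | ⟨e, _, hu, hv, rfl⟩ <;>
    cases hv
  exact ⟨e, hu, rfl⟩

theorem of_escCutAdj_eA {e : G.edgeSet} {b : ESCVert G} (h : escCutAdj G U (eA G e) b) :
    ∃ u ∈ (e : Sym2 V), b = vA G u := by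
  rcases escCutAdj_cases h with ⟨_, -, he, -⟩ | ⟨_, u, hu, he, rfl⟩ | ⟨_, _, -, he, -⟩ <;>
    cases he
  exact ⟨u, hu, rfl⟩

theorem not_escCutAdj_eB {e : G.edgeSet} {b : ESCVert G} : ¬escCutAdj G U (eB G e) b := by
  intro h
  rcases escCutAdj_cases h with ⟨_, -, he, -⟩ | ⟨_, _, -, he, -⟩ | ⟨_, _, -, he, -⟩ <;>
    cases he

theorem eq_of_reflTransGen_eB {e : G.edgeSet} {w : ESCVert G}
    (h : ReflTransGen (escCutAdj G U) (eB G e) w) : w = eB G e := by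
  rcases h.cases_head with rfl | ⟨c, hc, -⟩
  · rfl
  · exact (not_escCutAdj_eB hc).elim

theorem of_reflTransGen_vB {v : V} {w : ESCVert G}
    (h : ReflTransGen (escCutAdj G U) (vB G v) w) :
    w = vB G v ∨ ∃ e : G.edgeSet, v ∈ (e : Sym2 V) ∧ w = eB G e := by
  rcases h.cases_head with rfl | ⟨c, hc, hcw⟩
  · exact .inl rfl
  · obtain ⟨e, he, rfl⟩ := of_escCutAdj_vB hc
    exact .inr ⟨e, he, eq_of_reflTransGen_eB hcw⟩

theorem of_reflTransGen_vA {v : V} {w : ESCVert G}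
    (h : ReflTransGen (escCutAdj G U) (vA G v) w) :
    w = vA G v ∨
      v ∉ U ∧ (w = vB G v ∨ ∃ e : G.edgeSet, v ∈ (e : Sym2 V) ∧ w = eB G e) := by
  rcases h.cases_head with rfl | ⟨c, hc, hcw⟩
  · exact .inl rfl
  · obtain ⟨hv, rfl⟩ := of_escCutAdj_vA hc
    exact .inr ⟨hv, of_reflTransGen_vB hcw⟩

theorem eq_of_reflTransGen_vA_of_mem (hU : IsVertexCover G U) {e : G.edgeSet} {u u' : V}
    {w : ESCVert G} (hu : u ∈ (e : Sym2 V)) (hu' : u' ∈ (e : Sym2 V))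
    (h : ReflTransGen (escCutAdj G U) (vA G u) w)
    (h' : ReflTransGen (escCutAdj G U) (vA G u') w) : u = u' := by
  rcases of_reflTransGen_vA h with rfl | ⟨huU, rfl | ⟨_, -, rfl⟩⟩ <;>
    rcases of_reflTransGen_vA h' with hw | ⟨hu'U, hw | ⟨_, -, hw⟩⟩ <;> cases hw
  · rfl
  · rfl
  · exact hU.eq_of_mem_of_notMem e.2 hu hu' huU hu'U

theorem escCutAdj_succ_unique (hU : IsVertexCover G U) (a b b' w : ESCVert G)
    (hb : escCutAdj G U a b) (hb' : escCutAdj G U a b')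
    (hbw : ReflTransGen (escCutAdj G U) b w) (hb'w : ReflTransGen (escCutAdj G U) b' w) :
    b = b' := by
  rcases a with (v | v) | (e | e)
  · rw [(of_escCutAdj_vA hb).2, (of_escCutAdj_vA hb').2]
  · obtain ⟨_, -, rfl⟩ := of_escCutAdj_vB hb
    obtain ⟨_, -, rfl⟩ := of_escCutAdj_vB hb'
    rw [← eq_of_reflTransGen_eB hbw, ← eq_of_reflTransGen_eB hb'w]
  · obtain ⟨u, hu, rfl⟩ := of_escCutAdj_eA hb
    obtain ⟨u', hu', rfl⟩ := of_escCutAdj_eA hb'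
    rw [eq_of_reflTransGen_vA_of_mem hU hu hu' hbw hb'w]
  · exact (not_escCutAdj_eB hb).elim

end ESCVert

open ESCVert in
theorem esc_of_vertexCover_general {V : Type*} (G : SimpleGraph V) (U : Set V)
    (hU : IsVertexCover G U) :
    ({p : ESCVert G × ESCVert G | ∃ v ∈ U, p = (vA G v, vB G v)}.ncard = U.ncard) ∧
    SinglyConnected (fun a b : ESCVert G =>
      (a, b) ∈ ESCEdges G \ {p | ∃ v ∈ U, p = (vA G v, vB G v)}) := by
  constructor
  · have hC : {p : ESCVert G × ESCVert G | ∃ v ∈ U, p = (vA G v, vB G v)} =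
        (fun v => (vA G v, vB G v)) '' U := by
      ext p
      simp [eq_comm]
    rw [hC, Set.ncard_image_of_injective U fun _ _ h => vA_injective (congrArg Prod.fst h)]
  · exact singlyConnected_of_succ_unique (escCutAdj_succ_unique hU)

open ESCVert in
/-- if `U` is a vertex cover of a finite undirected graph `G` and
`C = {(v', v'') : v ∈ U}`, then `|C| = |U|` and removing the edges in `C` from the ESC
reduction graph of `G` leaves a singly-connected directed graph. -/
theorem esc_of_vertexCover {V : Type*} [Finite V] (G : SimpleGraph V) (U : Set V)
    (hU : IsVertexCover G U) :
    ({p : ESCVert G × ESCVert G | ∃ v ∈ U, p = (vA G v, vB G v)}.ncard = U.ncard) ∧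
    SinglyConnected (fun a b : ESCVert G =>
      (a, b) ∈ ESCEdges G \ {p | ∃ v ∈ U, p = (vA G v, vB G v)}) :=
  esc_of_vertexCover_general G U hU
end

section
/- Let G = (V,E) be a finite undirected graph, let G' = (V',E') be the ESC reduction graph of G, and let l be a natural number. Then G has a vertex cover of size at most l if and only if there exists an edge set C ⊆ E' with |C| ≤ l such that the directed graph (V', E' \ C) is singly-connected. -/
/-!
Every edge of `G'` goes one step up in the order `e' < v' < v'' < e''`, vertices `v'` have the
single successor `v''` and vertices `e''` have no successor. Hence two distinct simple paths with
common endpoints must be `e' → u₁' → u₁'' → f''` and `e' → u₂' → u₂'' → f''` with `u₁ ≠ u₂`;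
as `u₁, u₂ ∈ e ∩ f`, this forces `e = f = {u₁, u₂}`. So `G' - C` is singly-connected iff `C`
cuts, for every edge `{u₁, u₂}` of `G`, one of the two paths through `u₁` and `u₂`. Cutting
`v' → v''` for every `v` of a vertex cover achieves this; conversely, the vertices of `G` to which
the edges of such a `C` are attached form a vertex cover of size at most `|C|`.
-/

namespace ESCVert

variable {V : Type*} {G : SimpleGraph V}

instance [Finite V] : Finite (ESCVert G) := by unfold ESCVert; infer_instance

@[elab_as_elim]
theorem ind {motive : ESCVert G → Prop} (vA : ∀ v, motive (vA G v)) (vB : ∀ v, motive (vB G v))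
    (eA : ∀ e, motive (eA G e)) (eB : ∀ e, motive (eB G e)) (x : ESCVert G) : motive x := by
  rcases x with (v | v) | (e | e)
  exacts [vA v, vB v, eA e, eB e]

variable {u v : V} {e f : G.edgeSet} {b : ESCVert G}

@[simp] lemma vA_inj : vA G u = vA G v ↔ u = v := ⟨fun h => by cases h; rfl, congrArg _⟩

@[simp] lemma eB_inj : eB G e = eB G f ↔ e = f := ⟨fun h => by cases h; rfl, congrArg _⟩

lemma mk_vA_mem_escEdges_iff : (vA G u, b) ∈ ESCEdges G ↔ b = vB G u := by
  constructor
  · rintro (⟨v, h⟩ | ⟨e, v, -, h⟩ | ⟨e, v, -, h⟩) <;> cases h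
    rfl
  · rintro rfl
    exact Or.inl ⟨u, rfl⟩

lemma mk_vB_mem_escEdges_iff :
    (vB G u, b) ∈ ESCEdges G ↔ ∃ f : G.edgeSet, u ∈ (f : Sym2 V) ∧ b = eB G f := by
  constructor
  · rintro (⟨v, h⟩ | ⟨e, v, -, h⟩ | ⟨e, v, hv, h⟩) <;> cases h
    exact ⟨e, hv, rfl⟩
  · rintro ⟨f, hf, rfl⟩
    exact Or.inr (Or.inr ⟨f, u, hf, rfl⟩)

lemma mk_eA_mem_escEdges_iff : (eA G e, b) ∈ ESCEdges G ↔ ∃ u ∈ (e : Sym2 V), b = vA G u := by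
  constructor
  · rintro (⟨v, h⟩ | ⟨e, v, hv, h⟩ | ⟨e, v, -, h⟩) <;> cases h
    exact ⟨v, hv, rfl⟩
  · rintro ⟨u, hu, rfl⟩
    exact Or.inr (Or.inl ⟨e, u, hu, rfl⟩)

lemma mk_eB_not_mem_escEdges : (eB G f, b) ∉ ESCEdges G := by
  rintro (⟨v, h⟩ | ⟨e, v, -, h⟩ | ⟨e, v, -, h⟩) <;> cases h

end ESCVert

open ESCVert

section

variable {V : Type*} {G : SimpleGraph V} {u : V} {e f : G.edgeSet}

def escPath (e : G.edgeSet) (u : V) (f : G.edgeSet) : List (ESCVert G) :=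
  [eA G e, vA G u, vB G u, eB G f]

lemma escPath_nodup : (escPath e u f).Nodup := by
  simp only [escPath, List.nodup_cons, List.mem_cons, List.not_mem_nil, or_false, not_or,
    List.nodup_nil, not_false_eq_true, and_true]
  exact ⟨⟨nofun, nofun, nofun⟩, ⟨nofun, nofun⟩, nofun⟩

lemma isChain_escPath_sdiff_iff {C : Set (ESCVert G × ESCVert G)} :
    List.IsChain (fun a b => (a, b) ∈ ESCEdges G \ C) (escPath e u f) ↔
      u ∈ (e : Sym2 V) ∧ (eA G e, vA G u) ∉ C ∧ (vA G u, vB G u) ∉ C ∧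
        u ∈ (f : Sym2 V) ∧ (vB G u, eB G f) ∉ C := by
  simp only [Set.mem_sdiff, escPath, List.isChain_cons_cons, mk_eA_mem_escEdges_iff, vA_inj,
    exists_eq_right', mk_vA_mem_escEdges_iff, true_and, mk_vB_mem_escEdges_iff, eB_inj,
    List.IsChain.singleton, and_true, and_assoc]

variable {R : ESCVert G → ESCVert G → Prop} {t : List (ESCVert G)}

lemma eq_nil_of_isChain_eB_cons (hR : ∀ a b, R a b → (a, b) ∈ ESCEdges G)
    (h : List.IsChain R (eB G f :: t)) : t = [] := by
  rcases t with _ | ⟨b, t⟩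
  · rfl
  · exact absurd (hR _ _ (List.isChain_cons_cons.mp h).1) mk_eB_not_mem_escEdges

lemma of_isChain_vB_cons (hR : ∀ a b, R a b → (a, b) ∈ ESCEdges G)
    (h : List.IsChain R (vB G u :: t)) : t = [] ∨ ∃ f, t = [eB G f] := by
  rcases t with _ | ⟨b, t⟩
  · exact Or.inl rfl
  obtain ⟨hb, ht⟩ := List.isChain_cons_cons.mp h
  obtain ⟨f, -, rfl⟩ := mk_vB_mem_escEdges_iff.mp (hR _ _ hb)
  exact Or.inr ⟨f, by rw [eq_nil_of_isChain_eB_cons hR ht]⟩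

lemma of_isChain_vA_cons (hR : ∀ a b, R a b → (a, b) ∈ ESCEdges G)
    (h : List.IsChain R (vA G u :: t)) : t = [] ∨ t = [vB G u] ∨ ∃ f, t = [vB G u, eB G f] := by
  rcases t with _ | ⟨b, t⟩
  · exact Or.inl rfl
  obtain ⟨hb, ht⟩ := List.isChain_cons_cons.mp h
  obtain rfl := mk_vA_mem_escEdges_iff.mp (hR _ _ hb)
  rcases of_isChain_vB_cons hR ht with rfl | ⟨f, rfl⟩
  exacts [Or.inr (Or.inl rfl), Or.inr (Or.inr ⟨f, rfl⟩)]

lemma of_isChain_eA_cons (hR : ∀ a b, R a b → (a, b) ∈ ESCEdges G)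
    (h : List.IsChain R (eA G e :: t)) :
    t = [] ∨ ∃ u, t = [vA G u] ∨ t = [vA G u, vB G u] ∨ ∃ f, t = [vA G u, vB G u, eB G f] := by
  rcases t with _ | ⟨b, t⟩
  · exact Or.inl rfl
  obtain ⟨hb, ht⟩ := List.isChain_cons_cons.mp h
  obtain ⟨u, -, rfl⟩ := mk_eA_mem_escEdges_iff.mp (hR _ _ hb)
  refine Or.inr ⟨u, ?_⟩
  rcases of_isChain_vA_cons hR ht with rfl | rfl | ⟨f, rfl⟩
  exacts [Or.inl rfl, Or.inr (Or.inl rfl), Or.inr (Or.inr ⟨f, rfl⟩)]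

lemma IsSimplePath.eq_or_escPath (hR : ∀ a b, R a b → (a, b) ∈ ESCEdges G)
    {v w : ESCVert G} {p q : List (ESCVert G)}
    (hp : IsSimplePath R v w p) (hq : IsSimplePath R v w q) :
    p = q ∨ ∃ e f u₁ u₂, p = escPath e u₁ f ∧ q = escPath e u₂ f := by
  obtain ⟨hpc, hph, hpl, -⟩ := hp
  obtain ⟨hqc, hqh, hql, -⟩ := hq
  have hlast := hpl.trans hql.symm
  rcases p with _ | ⟨a, p⟩ <;> rcases q with _ | ⟨b, q⟩ <;>
    simp only [List.head?_cons, List.head?_nil, reduceCtorEq, Option.some.injEq] at hph hqh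
  subst a b
  replace hpc : List.IsChain R _ := hpc
  replace hqc : List.IsChain R _ := hqc
  induction v using ESCVert.ind with
  | vA u =>
    rcases of_isChain_vA_cons hR hpc with rfl | rfl | ⟨f, rfl⟩ <;>
    rcases of_isChain_vA_cons hR hqc with rfl | rfl | ⟨f', rfl⟩ <;>
    simp only [List.getLast?_cons_cons, List.getLast?_singleton, Option.some.injEq] at hlast <;>
    cases hlast <;> exact Or.inl rfl
  | vB u =>
    rcases of_isChain_vB_cons hR hpc with rfl | ⟨f, rfl⟩ <;>
    rcases of_isChain_vB_cons hR hqc with rfl | ⟨f', rfl⟩ <;>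
    simp only [List.getLast?_cons_cons, List.getLast?_singleton, Option.some.injEq] at hlast <;>
    cases hlast <;> exact Or.inl rfl
  | eA e =>
    rcases of_isChain_eA_cons hR hpc with rfl | ⟨u, rfl | rfl | ⟨f, rfl⟩⟩ <;>
    rcases of_isChain_eA_cons hR hqc with rfl | ⟨u', rfl | rfl | ⟨f', rfl⟩⟩ <;>
    simp only [List.getLast?_cons_cons, List.getLast?_singleton, Option.some.injEq] at hlast <;>
    cases hlast
    all_goals first | exact Or.inl rfl | exact Or.inr ⟨_, _, _, _, rfl, rfl⟩
  | eB f =>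
    rw [eq_nil_of_isChain_eB_cons hR hpc, eq_nil_of_isChain_eB_cons hR hqc]
    exact Or.inl rfl

theorem singlyConnected_iff_escPath (hR : ∀ a b, R a b → (a, b) ∈ ESCEdges G) :
    SinglyConnected R ↔ ∀ e f u₁ u₂,
      List.IsChain R (escPath e u₁ f) → List.IsChain R (escPath e u₂ f) → u₁ = u₂ := by
  constructor
  · intro h e f u₁ u₂ h₁ h₂
    cases h _ _ _ _ ⟨h₁, rfl, rfl, escPath_nodup⟩ ⟨h₂, rfl, rfl, escPath_nodup⟩
    rfl
  · intro h v w p q hp hq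
    rcases IsSimplePath.eq_or_escPath hR hp hq with rfl | ⟨e, f, u₁, u₂, rfl, rfl⟩
    · rfl
    · rw [h e f u₁ u₂ hp.1 hq.1]

theorem singlyConnected_of_isVertexCover {U : Set V} (hU : IsVertexCover G U) :
    SinglyConnected (fun a b => (a, b) ∈ ESCEdges G \ (fun v => (vA G v, vB G v)) '' U) := by
  refine (singlyConnected_iff_escPath fun _ _ h => h.1).mpr fun e f u₁ u₂ h₁ h₂ => ?_
  obtain ⟨he₁, -, hU₁, -⟩ := isChain_escPath_sdiff_iff.mp h₁
  obtain ⟨he₂, -, hU₂, -⟩ := isChain_escPath_sdiff_iff.mp h₂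
  by_contra hne
  obtain ⟨x, hx, hxe⟩ := hU e e.2
  rw [(Sym2.mem_and_mem_iff hne).mp ⟨he₁, he₂⟩, Sym2.mem_iff] at hxe
  rcases hxe with rfl | rfl
  exacts [hU₁ ⟨x, hx, rfl⟩, hU₂ ⟨x, hx, rfl⟩]

/-- `some v` at `v'` and `v''`, `none` at `e'` and `e''`. -/
def ESCVert.vertex? (x : ESCVert G) : Option V :=
  match (x : (V ⊕ V) ⊕ (G.edgeSet ⊕ G.edgeSet)) with
  | Sum.inl v => some (v.elim id id)
  | Sum.inr _ => none

def escEdgeBase (c : ESCVert G × ESCVert G) : Option V :=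
  c.1.vertex?.or c.2.vertex?

theorem isVertexCover_of_singlyConnected {C : Set (ESCVert G × ESCVert G)}
    (hC : SinglyConnected (fun a b => (a, b) ∈ ESCEdges G \ C)) :
    IsVertexCover G (some ⁻¹' (escEdgeBase '' C)) := by
  intro e he
  by_contra! hU
  induction e using Sym2.ind with | _ x y => ?_
  set e' : G.edgeSet := ⟨s(x, y), he⟩
  have hpath (u : V) (hu : u ∈ (e' : Sym2 V)) :
      List.IsChain (fun a b => (a, b) ∈ ESCEdges G \ C) (escPath e' u e') := by
    have hbase : u ∉ some ⁻¹' (escEdgeBase '' C) := fun h => hU u h hu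
    exact isChain_escPath_sdiff_iff.mpr ⟨hu, fun hc => hbase ⟨_, hc, rfl⟩,
      fun hc => hbase ⟨_, hc, rfl⟩, hu, fun hc => hbase ⟨_, hc, rfl⟩⟩
  exact G.ne_of_adj he <| (singlyConnected_iff_escPath fun _ _ h => h.1).mp hC e' e' x y
    (hpath x (Sym2.mem_mk_left x y)) (hpath y (Sym2.mem_mk_right x y))

end

/-- a finite undirected graph `G` has a vertex cover of size at most `l`
iff there is a set `C` of at most `l` edges of the ESC reduction graph `G'` of `G` whose
removal from `G'` leaves a singly-connected directed graph. -/
theorem vertexCover_iff_esc {V : Type*} [Finite V] (G : SimpleGraph V) (l : ℕ) :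
    (∃ U : Set V, IsVertexCover G U ∧ U.ncard ≤ l) ↔
      (∃ C : Set (ESCVert G × ESCVert G), C ⊆ ESCEdges G ∧ C.ncard ≤ l ∧
        SinglyConnected (fun a b : ESCVert G => (a, b) ∈ ESCEdges G \ C)) := by
  constructor
  · rintro ⟨U, hU, hcard⟩
    refine ⟨(fun v => (vA G v, vB G v)) '' U, ?_, (Set.ncard_image_le).trans hcard,
      singlyConnected_of_isVertexCover hU⟩
    rintro _ ⟨v, -, rfl⟩
    exact mk_vA_mem_escEdges_iff.mpr rfl
  · rintro ⟨C, -, hcard, hC⟩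
    refine ⟨_, isVertexCover_of_singlyConnected hC, ?_⟩
    calc (some ⁻¹' (escEdgeBase '' C)).ncard ≤ (escEdgeBase '' C).ncard :=
          Set.ncard_le_ncard_of_injOn some (fun _ h => h) (Option.some_injective _).injOn
      _ ≤ C.ncard := Set.ncard_image_le
      _ ≤ l := hcard
end

section
/- Let G = (V,E) be a finite undirected graph, let G'' = (V'',E'') be the VSC reduction graph of G, and let F ⊆ V'' be a vertex set such that the directed graph G'' \ F obtained by deleting the vertices of F and all edges incident to them is singly-connected. Then G has a vertex cover U with |U| ≤ |F|. -/
/-- The vertex set of the VSC reduction graph of an undirected graph `G`: a vertex `v'`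
for every vertex `v` of `G` and two vertices `e'`, `e''` for every edge `e` of `G`. -/
def VSCVert {V : Type*} (G : SimpleGraph V) : Type _ :=
  V ⊕ (G.edgeSet ⊕ G.edgeSet)

/-- The vertex `v'` of the VSC reduction graph. -/
def VSCVert.vv {V : Type*} (G : SimpleGraph V) (v : V) : VSCVert G :=
  Sum.inl v

/-- The vertex `e'` of the VSC reduction graph. -/
def VSCVert.eA {V : Type*} (G : SimpleGraph V) (e : G.edgeSet) : VSCVert G :=
  Sum.inr (Sum.inl e)

/-- The vertex `e''` of the VSC reduction graph. -/
def VSCVert.eB {V : Type*} (G : SimpleGraph V) (e : G.edgeSet) : VSCVert G :=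
  Sum.inr (Sum.inr e)

/-- The edge set of the VSC reduction graph of `G`: for every undirected edge
`e = {u, w}` of `G`, the four edges `(e', u')`, `(e', w')`, `(u', e'')`, `(w', e'')`
(i.e. edges `(e', v')` and `(v', e'')` for every endpoint `v` of `e`). -/
def VSCEdges {V : Type*} (G : SimpleGraph V) : Set (VSCVert G × VSCVert G) :=
  {p | (∃ (e : G.edgeSet) (v : V), v ∈ (e : Sym2 V) ∧ p = (VSCVert.eA G e, VSCVert.vv G v)) ∨
       (∃ (e : G.edgeSet) (v : V), v ∈ (e : Sym2 V) ∧ p = (VSCVert.vv G v, VSCVert.eB G e))}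

/-- if deleting a vertex set `F` (together with all incident edges) from
the VSC reduction graph of a finite undirected graph `G` leaves a singly-connected
directed graph, then `G` has a vertex cover of size at most `|F|`. -/
theorem vertexCover_of_vsc {V : Type*} [Finite V] (G : SimpleGraph V)
    (F : Set (VSCVert G))
    (hsc : SinglyConnected (fun a b : {x : VSCVert G // x ∉ F} =>
      (a.1, b.1) ∈ VSCEdges G)) :
    ∃ U : Set V, IsVertexCover G U ∧ U.ncard ≤ F.ncard := by
  classical
  -- map each vertex of F to a vertex of G
  set g : VSCVert G → V := fun x =>
    match x with
    | Sum.inl v => v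
    | Sum.inr (Sum.inl e) => (e : Sym2 V).out.1
    | Sum.inr (Sum.inr e) => (e : Sym2 V).out.1 with hg
  refine ⟨g '' F, ?_, ?_⟩
  · intro e he
    induction e using Sym2.ind with
    | _ u w =>
    rw [SimpleGraph.mem_edgeSet] at he
    have hne : u ≠ w := he.ne
    set E : G.edgeSet := ⟨s(u, w), he⟩ with hE
    -- F must contain one of the four vertices
    by_cases hA : VSCVert.eA G E ∈ F
    · exact ⟨g (VSCVert.eA G E), Set.mem_image_of_mem g hA, Sym2.out_fst_mem _⟩
    by_cases hB : VSCVert.eB G E ∈ F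
    · exact ⟨g (VSCVert.eB G E), Set.mem_image_of_mem g hB, Sym2.out_fst_mem _⟩
    by_cases hu : VSCVert.vv G u ∈ F
    · exact ⟨u, Set.mem_image_of_mem g hu, by simp⟩
    by_cases hw : VSCVert.vv G w ∈ F
    · exact ⟨w, Set.mem_image_of_mem g hw, by simp⟩
    exfalso
    set A : {x : VSCVert G // x ∉ F} := ⟨VSCVert.eA G E, hA⟩
    set Bu : {x : VSCVert G // x ∉ F} := ⟨VSCVert.vv G u, hu⟩
    set Bw : {x : VSCVert G // x ∉ F} := ⟨VSCVert.vv G w, hw⟩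
    set C : {x : VSCVert G // x ∉ F} := ⟨VSCVert.eB G E, hB⟩
    have hmu : u ∈ (E : Sym2 V) := by simp [hE]
    have hmw : w ∈ (E : Sym2 V) := by simp [hE]
    have hp : IsSimplePath (fun a b : {x : VSCVert G // x ∉ F} =>
        (a.1, b.1) ∈ VSCEdges G) A C [A, Bu, C] := by
      refine ⟨?_, rfl, rfl, ?_⟩
      · refine List.isChain_cons_cons.2 ⟨Or.inl ⟨E, u, hmu, rfl⟩, List.isChain_cons_cons.2
          ⟨Or.inr ⟨E, u, hmu, rfl⟩, List.isChain_singleton _⟩⟩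
      · simp only [List.nodup_cons, List.mem_cons, List.mem_singleton, List.not_mem_nil,
          List.nodup_nil, and_true, not_or, not_false_iff]
        refine ⟨⟨?_, ?_⟩, ?_⟩ <;> intro h <;>
          simp [A, Bu, C, Subtype.ext_iff, VSCVert.eA, VSCVert.eB, VSCVert.vv] at h <;>
          exact Sum.inl_ne_inr (Sum.inr_injective h)
    have hq : IsSimplePath (fun a b : {x : VSCVert G // x ∉ F} =>
        (a.1, b.1) ∈ VSCEdges G) A C [A, Bw, C] := by
      refine ⟨?_, rfl, rfl, ?_⟩
      · refine List.isChain_cons_cons.2 ⟨Or.inl ⟨E, w, hmw, rfl⟩, List.isChain_cons_cons.2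
          ⟨Or.inr ⟨E, w, hmw, rfl⟩, List.isChain_singleton _⟩⟩
      · simp only [List.nodup_cons, List.mem_cons, List.mem_singleton, List.not_mem_nil,
          List.nodup_nil, and_true, not_or, not_false_iff]
        refine ⟨⟨?_, ?_⟩, ?_⟩ <;> intro h <;>
          simp [A, Bw, C, Subtype.ext_iff, VSCVert.eA, VSCVert.eB, VSCVert.vv] at h <;>
          exact Sum.inl_ne_inr (Sum.inr_injective h)
    have := hsc A C _ _ hp hq
    simp only [List.cons.injEq] at this
    have h2 : VSCVert.vv G u = VSCVert.vv G w := by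
      simpa [Bu, Bw, Subtype.ext_iff] using this.2.1
    exact hne (Sum.inl_injective
      (show (Sum.inl u : V ⊕ (G.edgeSet ⊕ G.edgeSet)) = Sum.inl w from h2))
  · have : Finite (VSCVert G) := by unfold VSCVert; infer_instance
    exact Set.ncard_image_le (Set.toFinite F)
end

section
/- Let G = (V,E) be a finite undirected graph, let G'' = (V'',E'') be the VSC reduction graph of G, and let l be a natural number. Then G has a vertex cover of size at most l if and only if there exists a vertex set F ⊆ V'' with |F| ≤ l such that the directed graph G'' \ F obtained by deleting the vertices of F and all edges incident to them is singly-connected. -/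
/-!
Every edge of `G''` goes from the layer of the `e'` through the layer of the `v'` to the layer of
the `e''`, so a simple path has at most three vertices and two simple paths with the same ends
can differ only in their middle vertex. Hence `G'' \ F` is singly-connected iff for all surviving
`e'`, `f''` at most one surviving `u'` has `u ∈ e ∩ f`. Two distinct such `u`, `w` force
`e = f = {u, w}`, so this holds for `F = U'` when `U` is a vertex cover; conversely `F` must meet
`{e', e'', u', w'}` for every edge `e = {u, w}`, and sending each vertex of `F` to an incident
vertex of `G` yields a vertex cover of size at most `|F|`.
-/
section Graded

variable {α : Type*} {E : α → α → Prop} {rank : α → ℕ}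

theorem IsSimplePath.rank_add_one_eq (hE : ∀ x y, E x y → rank y = rank x + 1) {v w : α}
    {p : List α} (hp : IsSimplePath E v w p) : rank w + 1 = rank v + p.length := by
  obtain ⟨hc, hv, hw, -⟩ := hp
  induction (hc : p.IsChain E) generalizing v with
  | nil => simp at hv
  | singleton a =>
    cases Option.some.inj hv; cases Option.some.inj hw
    simp
  | @cons_cons a b l hab _ ih =>
    cases Option.some.inj hv
    have hrest := ih rfl (by simpa using hw)
    have hstep := hE _ _ hab
    simp only [List.length_cons] at hrest ⊢
    omega

theorem isSimplePath_triple (hE : ∀ x y, E x y → rank y = rank x + 1) {v a w : α}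
    (hva : E v a) (haw : E a w) : IsSimplePath E v w [v, a, w] := by
  have := hE _ _ hva; have := hE _ _ haw
  refine ⟨.cons_cons hva (.cons_cons haw (.singleton w)), rfl, rfl, ?_⟩
  simp [ne_of_apply_ne rank (by omega : rank v ≠ rank a),
    ne_of_apply_ne rank (by omega : rank v ≠ rank w),
    ne_of_apply_ne rank (by omega : rank a ≠ rank w)]

theorem IsSimplePath.eq_cases_of_rank_le_two (hE : ∀ x y, E x y → rank y = rank x + 1)
    (hrank : ∀ x, rank x ≤ 2) {v w : α} {p : List α} (hp : IsSimplePath E v w p) :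
    p = [v] ∨ p = [v, w] ∨ ∃ a, p = [v, a, w] ∧ E v a ∧ E a w := by
  have hlen := hp.rank_add_one_eq hE
  have := hrank w
  obtain ⟨hc, hv, hw, -⟩ := hp
  have hc : p.IsChain E := hc
  match p, hc, hv, hw, hlen with
  | [x], _, hv, _, _ => cases Option.some.inj hv; exact .inl rfl
  | [x, y], _, hv, hw, _ =>
    cases Option.some.inj hv; cases Option.some.inj hw
    exact .inr (.inl rfl)
  | [x, y, z], hc, hv, hw, _ =>
    cases Option.some.inj hv; cases Option.some.inj hw
    exact .inr (.inr ⟨y, rfl, by simpa using hc⟩)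
  | _ :: _ :: _ :: _ :: _, _, _, _, hlen => simp only [List.length_cons] at hlen; omega

theorem singlyConnected_iff_of_rank_le_two (hE : ∀ x y, E x y → rank y = rank x + 1)
    (hrank : ∀ x, rank x ≤ 2) :
    SinglyConnected E ↔ ∀ v a b w, E v a → E a w → E v b → E b w → a = b := by
  constructor
  · intro h v a b w hva haw hvb hbw
    simpa using h v w _ _ (isSimplePath_triple hE hva haw) (isSimplePath_triple hE hvb hbw)
  · intro h v w p q hp hq
    have hlen : p.length = q.length := by
      have := hp.rank_add_one_eq hE; have := hq.rank_add_one_eq hE; omega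
    rcases hp.eq_cases_of_rank_le_two hE hrank with rfl | rfl | ⟨a, rfl, hva, haw⟩ <;>
    rcases hq.eq_cases_of_rank_le_two hE hrank with rfl | rfl | ⟨b, rfl, hvb, hbw⟩ <;>
    simp only [List.length_cons, List.length_nil] at hlen
    all_goals first
      | rfl
      | omega
      | rw [h v a b w hva haw hvb hbw]

end Graded

namespace VSCVert

variable {V : Type*} {G : SimpleGraph V}

instance [Finite V] : Finite (VSCVert G) := by
  unfold VSCVert; infer_instance

/-- `e'`, `v'` and `e''` lie in layers `0`, `1` and `2`. -/
def layer : VSCVert G → ℕ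
  | Sum.inl _ => 1
  | Sum.inr (Sum.inl _) => 0
  | Sum.inr (Sum.inr _) => 2

theorem layer_le_two (x : VSCVert G) : x.layer ≤ 2 := by
  rcases x with _ | _ | _ <;> simp [layer]

theorem layer_of_mem_vscEdges {x y : VSCVert G} (h : (x, y) ∈ VSCEdges G) :
    y.layer = x.layer + 1 := by
  rcases h with ⟨e, v, -, h⟩ | ⟨e, v, -, h⟩ <;> cases h <;> rfl

theorem vv_injective : Function.Injective (vv G) := Sum.inl_injective

theorem eA_injective : Function.Injective (eA G) := Sum.inr_injective.comp Sum.inl_injective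

theorem eB_injective : Function.Injective (eB G) := Sum.inr_injective.comp Sum.inr_injective

theorem exists_of_mem_vscEdges_of_mem_vscEdges {x y z : VSCVert G} (hxy : (x, y) ∈ VSCEdges G)
    (hyz : (y, z) ∈ VSCEdges G) :
    ∃ (e f : G.edgeSet) (u : V), u ∈ (e : Sym2 V) ∧ u ∈ (f : Sym2 V) ∧
      x = eA G e ∧ y = vv G u ∧ z = eB G f := by
  rcases hxy with ⟨e, u, hue, ⟨⟩⟩ | ⟨_, _, _, ⟨⟩⟩ <;>
  rcases hyz with ⟨_, _, _, ⟨⟩⟩ | ⟨f, _, huf, ⟨⟩⟩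
  exact ⟨e, f, u, hue, huf, rfl, rfl, rfl⟩

theorem singlyConnected_compl_iff {F : Set (VSCVert G)} :
    SinglyConnected (fun a b : {x : VSCVert G // x ∉ F} => (a.1, b.1) ∈ VSCEdges G) ↔
      ∀ e f : G.edgeSet, eA G e ∉ F → eB G f ∉ F →
        {u | u ∈ (e : Sym2 V) ∧ u ∈ (f : Sym2 V) ∧ vv G u ∉ F}.Subsingleton := by
  rw [singlyConnected_iff_of_rank_le_two (rank := fun a => a.1.layer)
    (fun _ _ => layer_of_mem_vscEdges) (fun a => layer_le_two a.1)]
  constructor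
  · rintro h e f he hf u ⟨hue, huf, hu⟩ w ⟨hwe, hwf, hw⟩
    exact vv_injective (congrArg Subtype.val (h ⟨eA G e, he⟩ ⟨vv G u, hu⟩ ⟨vv G w, hw⟩ ⟨eB G f, hf⟩
      (.inl ⟨e, u, hue, rfl⟩) (.inr ⟨f, u, huf, rfl⟩) (.inl ⟨e, w, hwe, rfl⟩) (.inr ⟨f, w, hwf, rfl⟩)))
  · rintro h ⟨v, hv⟩ ⟨a, ha⟩ ⟨b, hb⟩ ⟨w, hw⟩ hva haw hvb hbw
    obtain ⟨e, f, u, hue, huf, rfl, rfl, rfl⟩ := exists_of_mem_vscEdges_of_mem_vscEdges hva haw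
    obtain ⟨e', f', u', hue', huf', he, rfl, hf⟩ := exists_of_mem_vscEdges_of_mem_vscEdges hvb hbw
    cases eA_injective he
    cases eB_injective hf
    exact Subtype.ext (congrArg (vv G) (h e f hv hw ⟨hue, huf, ha⟩ ⟨hue', huf', hb⟩))

/-- Sends `v'` to `v`, and `e'`, `e''` to an endpoint of `e`. -/
noncomputable def toVertex : VSCVert G → V
  | Sum.inl v => v
  | Sum.inr (Sum.inl e) => (e : Sym2 V).out.1
  | Sum.inr (Sum.inr e) => (e : Sym2 V).out.1

theorem toVertex_eA_mem (e : G.edgeSet) : (eA G e).toVertex ∈ (e : Sym2 V) := Sym2.out_fst_mem _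

theorem toVertex_eB_mem (e : G.edgeSet) : (eB G e).toVertex ∈ (e : Sym2 V) := Sym2.out_fst_mem _

theorem isVertexCover_image_toVertex {F : Set (VSCVert G)}
    (hF : ∀ e f : G.edgeSet, eA G e ∉ F → eB G f ∉ F →
      {u | u ∈ (e : Sym2 V) ∧ u ∈ (f : Sym2 V) ∧ vv G u ∉ F}.Subsingleton) :
    IsVertexCover G (toVertex '' F) := by
  intro e he
  induction e using Sym2.ind with | _ u w => ?_
  by_contra hcover
  have hA : eA G ⟨s(u, w), he⟩ ∉ F := fun hx => hcover ⟨_, ⟨_, hx, rfl⟩, toVertex_eA_mem _⟩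
  have hB : eB G ⟨s(u, w), he⟩ ∉ F := fun hx => hcover ⟨_, ⟨_, hx, rfl⟩, toVertex_eB_mem _⟩
  have hu : vv G u ∉ F := fun hx => hcover ⟨u, ⟨_, hx, rfl⟩, Sym2.mem_mk_left u w⟩
  have hw : vv G w ∉ F := fun hx => hcover ⟨w, ⟨_, hx, rfl⟩, Sym2.mem_mk_right u w⟩
  exact G.ne_of_adj he (hF _ _ hA hB ⟨Sym2.mem_mk_left u w, Sym2.mem_mk_left u w, hu⟩
    ⟨Sym2.mem_mk_right u w, Sym2.mem_mk_right u w, hw⟩)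

end VSCVert

theorem IsVertexCover.subsingleton_setOf_mem_notMem {V : Type*} {G : SimpleGraph V} {U : Set V}
    (hU : IsVertexCover G U) {e : Sym2 V} (he : e ∈ G.edgeSet) :
    {u | u ∈ e ∧ u ∉ U}.Subsingleton := by
  rintro u ⟨hue, huU⟩ w ⟨hwe, hwU⟩
  by_contra huw
  obtain ⟨x, hxU, hxe⟩ := hU e he
  rw [(Sym2.mem_and_mem_iff huw).1 ⟨hue, hwe⟩, Sym2.mem_iff] at hxe
  rcases hxe with rfl | rfl
  exacts [huU hxU, hwU hxU]

/-- a finite undirected graph `G` has a vertex cover of size at most `l`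
iff there is a set `F` of at most `l` vertices of the VSC reduction graph `G''` of `G`
whose deletion (together with all incident edges) from `G''` leaves a singly-connected
directed graph. -/
theorem vertexCover_iff_vsc {V : Type*} [Finite V] (G : SimpleGraph V) (l : ℕ) :
    (∃ U : Set V, IsVertexCover G U ∧ U.ncard ≤ l) ↔
      (∃ F : Set (VSCVert G), F.ncard ≤ l ∧
        SinglyConnected (fun a b : {x : VSCVert G // x ∉ F} =>
          (a.1, b.1) ∈ VSCEdges G)) := by
  simp_rw [VSCVert.singlyConnected_compl_iff]
  constructor
  · rintro ⟨U, hU, hcard⟩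
    refine ⟨VSCVert.vv G '' U,
      (Set.ncard_image_of_injective U VSCVert.vv_injective).trans_le hcard, fun e _ _ _ => ?_⟩
    exact (hU.subsingleton_setOf_mem_notMem e.2).anti
      fun u ⟨hue, _, hu⟩ => ⟨hue, fun huU => hu ⟨u, huU, rfl⟩⟩
  · rintro ⟨F, hF, hsc⟩
    exact ⟨VSCVert.toVertex '' F, VSCVert.isVertexCover_image_toVertex hsc,
      (Set.ncard_image_le F.toFinite).trans hF⟩
end
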